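/- arXiv:2311.07331 — 3 statements merged into one kernel-verified Lean document; each statement's English description precedes it below -/
import Mathlib

section
/- Let m, g, h₂, k_α > 0 and let g₁, e_x, e_f ∈ ℝ³ with ‖g₁‖ ≤ h₂. Define f_d = m g e₃ − m g₁ + 2m tanh(e_x) − m k_α tanh(e_f). If k_α < g − h₂ − 2, then the third component of f_d satisfies (f_d)₃ ≥ m(g − h₂ − 2 − k_α) > 0; in particular f_d ≠ 0. -/
noncomputable def tanhVec (v : EuclideanSpace ℝ (Fin 3)) : EuclideanSpace ℝ (Fin 3) :=
  WithLp.toLp 2 fun i => Real.tanh (v i)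

noncomputable def e3 : EuclideanSpace ℝ (Fin 3) := WithLp.toLp 2 fun i => if i = 2 then 1 else 0

@[simp]
lemma tanhVec_apply (v : EuclideanSpace ℝ (Fin 3)) (i : Fin 3) : tanhVec v i = Real.tanh (v i) :=
  rfl

@[simp]
lemma e3_apply_two : e3 2 = 1 := by
  simp [e3]

lemma abs_apply_le_norm {n : ℕ} (x : EuclideanSpace ℝ (Fin n)) (i : Fin n) : |x i| ≤ ‖x‖ :=
  PiLp.norm_apply_le x i

lemma mul_sub_le_of_abs_le {m g h kα a t s : ℝ} (hm : 0 ≤ m) (hkα : 0 ≤ kα) (ha : |a| ≤ h)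
    (ht : |t| ≤ 1) (hs : |s| ≤ 1) :
    m * (g - h - 2 - kα) ≤ m * g - m * a + 2 * m * t - m * kα * s := by
  have hkαs : kα * s ≤ kα := mul_le_of_le_one_right hkα (abs_le.mp hs).2
  have hinner : g - h - 2 - kα ≤ g - a + 2 * t - kα * s := by
    linarith [(abs_le.mp ha).2, (abs_le.mp ht).1]
  calc m * (g - h - 2 - kα) ≤ m * (g - a + 2 * t - kα * s) := mul_le_mul_of_nonneg_left hinner hm
    _ = m * g - m * a + 2 * m * t - m * kα * s := by ring

theorem fd_third_component_pos_general (m g h₂ kα : ℝ) (hm : 0 < m)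
    (hkα : 0 < kα) (g₁ ex ef : EuclideanSpace ℝ (Fin 3)) (hg₁ : ‖g₁‖ ≤ h₂)
    (fd : EuclideanSpace ℝ (Fin 3))
    (hfd : fd = (m * g) • e3 - m • g₁ + (2 * m) • tanhVec ex - (m * kα) • tanhVec ef)
    (hgain : kα < g - h₂ - 2) :
    fd 2 ≥ m * (g - h₂ - 2 - kα) ∧ 0 < m * (g - h₂ - 2 - kα) ∧ fd ≠ 0 := by
  have hlow : m * (g - h₂ - 2 - kα) ≤ fd 2 := by
    subst hfd
    simpa [mul_assoc] using mul_sub_le_of_abs_le hm.le hkα.le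
      ((abs_apply_le_norm g₁ 2).trans hg₁) (Real.abs_tanh_lt_one (ex 2)).le
      (Real.abs_tanh_lt_one (ef 2)).le
  have hpos : 0 < m * (g - h₂ - 2 - kα) := mul_pos hm (by linarith)
  refine ⟨hlow, hpos, ?_⟩
  rintro rfl
  exact absurd hlow (by simpa using hpos)

theorem fd_third_component_pos (m g h₂ kα : ℝ) (hm : 0 < m) (hg : 0 < g) (hh₂ : 0 < h₂)
    (hkα : 0 < kα) (g₁ ex ef : EuclideanSpace ℝ (Fin 3)) (hg₁ : ‖g₁‖ ≤ h₂)
    (fd : EuclideanSpace ℝ (Fin 3))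
    (hfd : fd = (m * g) • e3 - m • g₁ + (2 * m) • tanhVec ex - (m * kα) • tanhVec ef)
    (hgain : kα < g - h₂ - 2) :
    fd 2 ≥ m * (g - h₂ - 2 - kα) ∧ 0 < m * (g - h₂ - 2 - kα) ∧ fd ≠ 0 :=
  fd_third_component_pos_general m g h₂ kα hm hkα g₁ ex ef hg₁ fd hfd hgain
end

section
/- For every angle θ' ∈ [0, π], the inequality √(1 − 2 cos(θ'/2) cos(θ') + cos²(θ'/2)) ≤ 2 sin(θ'/2) holds. -/
/-!
Write `c = cos (θ / 2)`, so that `cos θ = 2c² - 1` and `sin² (θ / 2) = 1 - c²`. Then the square of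
the right-hand side exceeds the radicand by `(1 - c)² (3 + 4c)`, which is nonnegative because
`c ≥ 0` on `[0, π / 2]`.
-/

open Real

lemma sq_two_sin_sub_eq (x : ℝ) :
    (2 * sin x) ^ 2 - (1 - 2 * cos x * cos (2 * x) + cos x ^ 2) =
      (1 - cos x) ^ 2 * (3 + 4 * cos x) := by
  rw [cos_two_mul, mul_pow, sin_sq]
  ring

lemma one_sub_two_cos_mul_cos_two_mul_add_sq_le {x : ℝ} (hx : -(3 / 4) ≤ cos x) :
    1 - 2 * cos x * cos (2 * x) + cos x ^ 2 ≤ (2 * sin x) ^ 2 := by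
  have hprod : 0 ≤ (1 - cos x) ^ 2 * (3 + 4 * cos x) := mul_nonneg (sq_nonneg _) (by linarith)
  linarith [sq_two_sin_sub_eq x]

lemma sqrt_one_sub_two_cos_mul_cos_two_mul_add_sq_le {x : ℝ} (hsin : 0 ≤ sin x)
    (hcos : -(3 / 4) ≤ cos x) :
    √(1 - 2 * cos x * cos (2 * x) + cos x ^ 2) ≤ 2 * sin x :=
  sqrt_le_iff.mpr ⟨by positivity, one_sub_two_cos_mul_cos_two_mul_add_sq_le hcos⟩

theorem trig_ineq (θ : ℝ) (h0 : 0 ≤ θ) (hπ : θ ≤ Real.pi) :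
    Real.sqrt (1 - 2 * Real.cos (θ / 2) * Real.cos θ + Real.cos (θ / 2) ^ 2) ≤
      2 * Real.sin (θ / 2) := by
  have hsin : 0 ≤ sin (θ / 2) := sin_nonneg_of_nonneg_of_le_pi (by linarith) (by linarith)
  have hcos : 0 ≤ cos (θ / 2) := cos_nonneg_of_mem_Icc ⟨by linarith, by linarith⟩
  have := sqrt_one_sub_two_cos_mul_cos_two_mul_add_sq_le hsin (by linarith)
  rwa [mul_div_cancel₀ θ two_ne_zero] at this
end

section
/- Let α₁ > 0, let f_d ∈ ℝ³ with 0 < ‖f_d‖ ≤ α₁, let R, R_c ∈ SO(3) with R_c e₃ = f_d/‖f_d‖, and set f = ‖f_d‖ √((1 + e₃ᵀ R_cᵀ R e₃)/2). Then ‖f_d − f·R e₃‖ ≤ 2 α₁ sin(θ'/2), where θ' ∈ [0, π] is the angle between R_c e₃ and R e₃. -/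
open Matrix

noncomputable def enorm3 (v : Fin 3 → ℝ) : ℝ := Real.sqrt (∑ i, v i ^ 2)

def dot3 (v w : Fin 3 → ℝ) : ℝ := ∑ i, v i * w i

def E3 : Fin 3 → ℝ := ![0, 0, 1]

set_option maxHeartbeats 800000

lemma Delta_f_aux (n α c s d : ℝ) (hn0 : 0 < n) (hn1 : n ≤ α)
    (hc0 : 0 ≤ c) (hc1 : c ≤ 1) (hs0 : 0 ≤ s)
    (hd2 : d = 2 * c ^ 2 - 1) (hsc : s ^ 2 = 1 - c ^ 2) :
    n ^ 2 * (1 - 2 * c * d + c ^ 2) ≤ (2 * α * s) ^ 2 := by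
  have hfact : 0 ≤ (c - 1) ^ 2 * (4 * c + 3) := by positivity
  have h1 : 1 - 2 * c * d + c ^ 2 ≤ 4 * s ^ 2 := by rw [hd2, hsc]; nlinarith
  have h2 : 0 ≤ 1 - 2 * c * d + c ^ 2 := by
    rw [hd2]
    nlinarith [mul_nonneg (mul_nonneg hc0 hc0) hc0, sq_nonneg c]
  calc n ^ 2 * (1 - 2 * c * d + c ^ 2) ≤ α ^ 2 * (4 * s ^ 2) := by
        apply mul_le_mul (by nlinarith) h1 h2 (by positivity)
    _ = (2 * α * s) ^ 2 := by ring

theorem Delta_f_bound (α₁ : ℝ) (hα₁ : 0 < α₁) (fd : Fin 3 → ℝ)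
    (hfd0 : 0 < enorm3 fd) (hfd1 : enorm3 fd ≤ α₁)
    (R Rc : Matrix (Fin 3) (Fin 3) ℝ)
    (hR : Rᵀ * R = 1) (hRdet : R.det = 1) (hRc : Rcᵀ * Rc = 1) (hRcdet : Rc.det = 1)
    (hz : Rc.mulVec E3 = (enorm3 fd)⁻¹ • fd)
    (θ : ℝ) (h0 : 0 ≤ θ) (hπ : θ ≤ Real.pi)
    (hθ : Real.cos θ = dot3 (Rc.mulVec E3) (R.mulVec E3))
    (f : ℝ)
    (hf : f = enorm3 fd * Real.sqrt ((1 + dot3 (Rc.mulVec E3) (R.mulVec E3)) / 2)) :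
    enorm3 (fd - f • R.mulVec E3) ≤ 2 * α₁ * Real.sin (θ / 2) := by
  set n := enorm3 fd with hn
  set u := Rc.mulVec E3 with hu
  set v := R.mulVec E3 with hv
  have hn0 : 0 < n := hfd0
  have huu : dot3 u u = 1 := by
    have h := congrFun (congrFun hRc 2) 2
    simp [Matrix.mul_apply, Matrix.transpose_apply, Fin.sum_univ_three,
      Matrix.one_apply] at h
    simp [dot3, hu, Matrix.mulVec, dotProduct, E3, Fin.sum_univ_three]
    linarith
  have hvv : dot3 v v = 1 := by
    have h := congrFun (congrFun hR 2) 2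
    simp [Matrix.mul_apply, Matrix.transpose_apply, Fin.sum_univ_three,
      Matrix.one_apply] at h
    simp [dot3, hv, Matrix.mulVec, dotProduct, E3, Fin.sum_univ_three]
    linarith
  have hfdu : fd = n • u := by
    rw [hz, smul_smul, mul_inv_cancel₀ hn0.ne', one_smul]
  set d := dot3 u v with hdd
  have hd : d = Real.cos θ := hθ.symm
  set c := Real.cos (θ / 2) with hc
  set s := Real.sin (θ / 2) with hs
  have hc0 : 0 ≤ c := by
    apply Real.cos_nonneg_of_mem_Icc
    constructor <;> [linarith [Real.pi_pos]; linarith]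
  have hs0 : 0 ≤ s := by
    apply Real.sin_nonneg_of_nonneg_of_le_pi <;> linarith [Real.pi_pos]
  have hcosθ : Real.cos θ = 2 * c ^ 2 - 1 := by
    have := Real.cos_two_mul (θ / 2)
    rw [show 2 * (θ / 2) = θ by ring] at this
    linarith
  have hd2 : d = 2 * c ^ 2 - 1 := by rw [hd, hcosθ]
  have hsc : s ^ 2 = 1 - c ^ 2 := by
    have := Real.sin_sq_add_cos_sq (θ / 2)
    linarith
  have hfc : f = n * c := by
    rw [hf, hd2]
    congr 1
    rw [show (1 + (2 * c ^ 2 - 1)) / 2 = c ^ 2 by ring]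
    exact Real.sqrt_sq hc0
  have hdot : dot3 (fd - f • v) (fd - f • v) = n ^ 2 * (1 - 2 * c * d + c ^ 2) := by
    rw [hfdu, hfc]
    simp only [dot3, Fin.sum_univ_three, Pi.sub_apply, Pi.smul_apply,
      smul_eq_mul] at huu hvv hdd ⊢
    rw [hdd]
    linear_combination (n ^ 2) * huu + (n ^ 2 * c ^ 2) * hvv
  have hkey : n ^ 2 * (1 - 2 * c * d + c ^ 2) ≤ (2 * α₁ * s) ^ 2 :=
    Delta_f_aux n α₁ c s d hn0 hfd1 hc0 (Real.cos_le_one _) hs0 hd2 hsc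
  have henorm : enorm3 (fd - f • v) = Real.sqrt (dot3 (fd - f • v) (fd - f • v)) := by
    simp [enorm3, dot3, sq]
  rw [henorm, hdot]
  calc Real.sqrt (n ^ 2 * (1 - 2 * c * d + c ^ 2)) ≤ Real.sqrt ((2 * α₁ * s) ^ 2) :=
        Real.sqrt_le_sqrt hkey
    _ = 2 * α₁ * s := Real.sqrt_sq (by positivity)
end
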